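/- Fix N, H ∈ ℕ, λ > 0, L_φ > 0 and d ∈ ℕ. Let φ_{n,h} ∈ ℝ^d for n ∈ [N], h ∈ [H] satisfy ‖φ_{n,h}‖₂ ≤ L_φ. Define Σ_n := λ I + ∑_{n' < n} ∑_{h ≤ H} φ_{n',h} φ_{n',h}ᵀ and Σ_{n,h} := Σ_n + ∑_{h' < h} φ_{n,h'} φ_{n,h'}ᵀ. Then ∑_{n=1}^{N} ∑_{h=1}^{H} ‖φ_{n,h}‖_{Σ_n^{-1}} ≤ 2 ∑_{n=1}^{N} ∑_{h=1}^{H} ‖φ_{n,h}‖_{Σ_{n,h}^{-1}} + (2 L_φ H d / √λ) · log( 1 + N H L_φ² / (λ d) ). -/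

import Mathlib

/-!
For a positive definite `A`, a rank-one update `B = A + v vᵀ` satisfies
`det B = det A (1 + vᵀA⁻¹v)` and, by Sherman–Morrison and Cauchy–Schwarz,
`det A · xᵀA⁻¹x ≤ det B · xᵀB⁻¹x`. Along episode `n` the Gram matrix grows from `Σ_n` to
`Σ_{n,H} = Σ_{n+1}` by rank-one updates, so if `det Σ_{n+1} ≤ 2 det Σ_n` then
`‖φ‖²_{Σ_n⁻¹} ≤ 2 ‖φ‖²_{Σ_{n,h}⁻¹}` for every stage `h`. In the remaining episodes the determinant
more than doubles; since it starts at `λ^d` and, by AM-GM on the eigenvalues, ends below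
`(λ + N H L_φ² / d)^d`, there are at most `2 d log(1 + N H L_φ² / (λ d))` of them, and there each
of the `H` terms is at most `L_φ / √λ` because `Σ_n ≥ λ I`.
-/

open Matrix Finset

/-- The Gram matrix `Σ_n = λ I + ∑_{n' < n} ∑_{h < H} φ_{n',h} φ_{n',h}ᵀ`
(episodes and stages are `0`-indexed). -/
noncomputable def gramEpisode (d H : ℕ) (lam : ℝ) (φ : ℕ → ℕ → Fin d → ℝ) (n : ℕ) :
    Matrix (Fin d) (Fin d) ℝ :=
  lam • (1 : Matrix (Fin d) (Fin d) ℝ) +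
    ∑ n' ∈ Finset.range n, ∑ h ∈ Finset.range H, vecMulVec (φ n' h) (φ n' h)

/-- The within-episode Gram matrix `Σ_{n,h} = Σ_n + ∑_{h' < h} φ_{n,h'} φ_{n,h'}ᵀ`. -/
noncomputable def gramStage (d H : ℕ) (lam : ℝ) (φ : ℕ → ℕ → Fin d → ℝ) (n h : ℕ) :
    Matrix (Fin d) (Fin d) ℝ :=
  gramEpisode d H lam φ n + ∑ h' ∈ Finset.range h, vecMulVec (φ n h') (φ n h')

theorem Real.prod_le_sum_div_card_pow {ι : Type*} (s : Finset ι) {z : ι → ℝ}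
    (hz : ∀ i ∈ s, 0 ≤ z i) : ∏ i ∈ s, z i ≤ ((∑ i ∈ s, z i) / #s) ^ #s := by
  rcases s.eq_empty_or_nonempty with rfl | hs
  · simp
  have hcard : (0 : ℝ) < #s := by exact_mod_cast hs.card_pos
  have hamgm := Real.geom_mean_le_arith_mean s (fun _ => 1) z (fun _ _ => zero_le_one)
    (by simpa using hcard) hz
  simp only [Real.rpow_one, one_mul, sum_const, nsmul_eq_mul, mul_one] at hamgm
  have hprod : 0 ≤ ∏ i ∈ s, z i := prod_nonneg hz
  calc ∏ i ∈ s, z i = ((∏ i ∈ s, z i) ^ (#s : ℝ)⁻¹) ^ #s := by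
        rw [← Real.rpow_natCast, ← Real.rpow_mul hprod, inv_mul_cancel₀ hcard.ne', Real.rpow_one]
    _ ≤ ((∑ i ∈ s, z i) / #s) ^ #s := by gcongr

namespace Matrix

variable {n : Type*} [Fintype n]

theorem PosSemidef.dotProduct_mulVec_sq_le {M : Matrix n n ℝ} (hM : M.PosSemidef)
    (x y : n → ℝ) : (x ⬝ᵥ M *ᵥ y) ^ 2 ≤ (x ⬝ᵥ M *ᵥ x) * (y ⬝ᵥ M *ᵥ y) := by
  let := M.toSeminormedAddCommGroup hM
  let := M.toInnerProductSpace hM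
  have := real_inner_mul_inner_self_le x y
  change (M *ᵥ y) ⬝ᵥ x * ((M *ᵥ y) ⬝ᵥ x) ≤ (M *ᵥ x) ⬝ᵥ x * ((M *ᵥ y) ⬝ᵥ y) at this
  simpa [sq, dotProduct_comm] using this

theorem IsHermitian.dotProduct_mulVec_comm {M : Matrix n n ℝ} (hM : M.IsHermitian)
    (x y : n → ℝ) : x ⬝ᵥ M *ᵥ y = y ⬝ᵥ M *ᵥ x := by
  rw [dotProduct_comm, ← vecMul_transpose, ← dotProduct_mulVec,
    ← conjTranspose_eq_transpose_of_trivial, hM.eq]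

variable [DecidableEq n]

theorem det_add_vecMulVec {K : Type*} [Field K] {A : Matrix n n K} (hA : IsUnit A.det)
    (u v : n → K) : (A + vecMulVec u v).det = A.det * (1 + v ⬝ᵥ A⁻¹ *ᵥ u) := by
  rw [vecMulVec_eq Unit, det_add_replicateCol_mul_replicateRow hA, det_unique (n := Unit),
    Matrix.mul_assoc, ← replicateCol_mulVec, add_apply, one_apply_eq,
    replicateRow_mul_replicateCol_apply]

theorem inv_add_vecMulVec {K : Type*} [Field K] {A : Matrix n n K} (hA : IsUnit A.det)
    (u v : n → K) (h : 1 + v ⬝ᵥ A⁻¹ *ᵥ u ≠ 0) :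
    (A + vecMulVec u v)⁻¹ =
      A⁻¹ - (1 + v ⬝ᵥ A⁻¹ *ᵥ u)⁻¹ • vecMulVec (A⁻¹ *ᵥ u) (v ᵥ* A⁻¹) := by
  refine inv_eq_right_inv ?_
  rw [Matrix.add_mul, Matrix.mul_sub, Matrix.mul_sub, mul_nonsing_inv A hA, Matrix.mul_smul,
    Matrix.mul_smul, mul_vecMulVec, mulVec_mulVec, mul_nonsing_inv A hA, one_mulVec,
    vecMulVec_mul, vecMulVec_mul_vecMulVec, vecMulVec_smul, smul_smul]
  have hs : (1 + v ⬝ᵥ A⁻¹ *ᵥ u)⁻¹ * v ⬝ᵥ A⁻¹ *ᵥ u = 1 - (1 + v ⬝ᵥ A⁻¹ *ᵥ u)⁻¹ := by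
    field_simp
    ring
  rw [hs, sub_smul, one_smul]
  abel

theorem PosDef.det_le_det_add_vecMulVec_self {A : Matrix n n ℝ} (hA : A.PosDef) (v : n → ℝ) :
    A.det ≤ (A + vecMulVec v v).det := by
  have hp : 0 ≤ v ⬝ᵥ A⁻¹ *ᵥ v := by simpa using hA.inv.posSemidef.dotProduct_mulVec_nonneg v
  rw [det_add_vecMulVec hA.det_pos.ne'.isUnit]
  nlinarith [hA.det_pos]

theorem PosDef.det_mul_dotProduct_inv_mulVec_le_add_vecMulVec_self {A : Matrix n n ℝ}
    (hA : A.PosDef) (v x : n → ℝ) :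
    A.det * (x ⬝ᵥ A⁻¹ *ᵥ x) ≤ (A + vecMulVec v v).det * (x ⬝ᵥ (A + vecMulVec v v)⁻¹ *ᵥ x) := by
  set p := v ⬝ᵥ A⁻¹ *ᵥ v
  set q := x ⬝ᵥ A⁻¹ *ᵥ x
  set t := v ⬝ᵥ A⁻¹ *ᵥ x
  have hp : 0 ≤ p := by simpa using hA.inv.posSemidef.dotProduct_mulVec_nonneg v
  have hquad : x ⬝ᵥ (A + vecMulVec v v)⁻¹ *ᵥ x = q - t ^ 2 / (1 + p) := by
    rw [inv_add_vecMulVec hA.det_pos.ne'.isUnit v v (by positivity), sub_mulVec, dotProduct_sub,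
      smul_mulVec, dotProduct_smul, vecMulVec_mulVec, dotProduct_smul, ← dotProduct_mulVec,
      hA.inv.isHermitian.dotProduct_mulVec_comm x v]
    simp only [MulOpposite.smul_eq_mul_unop, MulOpposite.unop_op, smul_eq_mul]
    ring
  have hCS : t ^ 2 ≤ p * q := hA.inv.posSemidef.dotProduct_mulVec_sq_le v x
  rw [det_add_vecMulVec hA.det_pos.ne'.isUnit, hquad, mul_assoc]
  refine mul_le_mul_of_nonneg_left ?_ hA.det_pos.le
  rw [mul_sub, mul_div_cancel₀ _ (by positivity)]
  linarith

theorem PosSemidef.det_le_trace_div_card_pow {A : Matrix n n ℝ} (hA : A.PosSemidef) :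
    A.det ≤ (A.trace / Fintype.card n) ^ Fintype.card n := by
  rw [hA.isHermitian.det_eq_prod_eigenvalues, hA.isHermitian.trace_eq_sum_eigenvalues]
  simpa using Real.prod_le_sum_div_card_pow univ fun i _ => hA.eigenvalues_nonneg i

theorem dotProduct_inv_mulVec_le_div {lam : ℝ} (hlam : 0 < lam) {P : Matrix n n ℝ}
    (hP : P.PosSemidef) (x : n → ℝ) : x ⬝ᵥ (lam • 1 + P)⁻¹ *ᵥ x ≤ x ⬝ᵥ x / lam := by
  have hA : (lam • 1 + P).PosDef := (PosDef.one.smul hlam).add_posSemidef hP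
  set y := (lam • 1 + P)⁻¹ *ᵥ x
  have hy : (lam • 1 + P) *ᵥ y = x := by
    rw [mulVec_mulVec, mul_nonsing_inv _ hA.det_pos.ne'.isUnit, one_mulVec]
  have hxy : x ⬝ᵥ y = lam * (y ⬝ᵥ y) + y ⬝ᵥ P *ᵥ y := by
    rw [← hy, dotProduct_comm, add_mulVec, smul_mulVec, one_mulVec, dotProduct_add,
      dotProduct_smul, smul_eq_mul]
  have hPy : 0 ≤ y ⬝ᵥ P *ᵥ y := by simpa using hP.dotProduct_mulVec_nonneg y
  have hsq : 0 ≤ (x - lam • y) ⬝ᵥ (x - lam • y) := by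
    simpa using dotProduct_self_star_nonneg (x - lam • y)
  simp only [dotProduct_sub, sub_dotProduct, dotProduct_smul, smul_dotProduct, smul_eq_mul,
    dotProduct_comm y x] at hsq
  rw [le_div_iff₀ hlam]
  nlinarith

end Matrix

theorem mul_two_pow_card_filter_le_of_monotone {f : ℕ → ℝ} (hf : Monotone f) (N : ℕ) :
    f 0 * 2 ^ #{n ∈ range N | 2 * f n < f (n + 1)} ≤ f N := by
  induction N with
  | zero => simp
  | succ m ih =>
    rw [range_add_one, filter_insert]
    split_ifs with hm
    · rw [card_insert_of_notMem (by simp), pow_succ]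
      linarith
    · exact ih.trans (hf m.le_succ)

theorem Finset.sum_le_sum_add_card_filter_mul {ι : Type*} (s : Finset ι) (p : ι → Prop)
    [DecidablePred p] {f g : ι → ℝ} {C : ℝ} (hg : ∀ i ∈ s, 0 ≤ g i)
    (hp : ∀ i ∈ s, p i → f i ≤ C) (hnp : ∀ i ∈ s, ¬ p i → f i ≤ g i) :
    ∑ i ∈ s, f i ≤ ∑ i ∈ s, g i + #{i ∈ s | p i} * C := by
  rw [← sum_filter_add_sum_filter_not s p f, add_comm]
  gcongr
  · calc ∑ i ∈ s with ¬ p i, f i ≤ ∑ i ∈ s with ¬ p i, g i :=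
          sum_le_sum fun i hi => hnp i (mem_filter.1 hi).1 (mem_filter.1 hi).2
      _ ≤ ∑ i ∈ s, g i := sum_le_sum_of_subset_of_nonneg (filter_subset _ _)
          fun i hi _ => hg i hi
  · simpa using sum_le_sum fun i hi => hp i (mem_filter.1 hi).1 (mem_filter.1 hi).2

section Gram

variable {d H : ℕ} {lam : ℝ} {φ : ℕ → ℕ → Fin d → ℝ}

theorem gramStage_zero (n : ℕ) : gramStage d H lam φ n 0 = gramEpisode d H lam φ n := by
  simp [gramStage]

theorem gramStage_succ (n h : ℕ) :
    gramStage d H lam φ n (h + 1) = gramStage d H lam φ n h + vecMulVec (φ n h) (φ n h) := by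
  simp [gramStage, sum_range_succ, add_assoc]

theorem gramEpisode_succ (n : ℕ) :
    gramEpisode d H lam φ (n + 1) = gramStage d H lam φ n H := by
  simp [gramEpisode, gramStage, sum_range_succ, add_assoc]

theorem posSemidef_sum_vecMulVec_self {ι : Type*} (s : Finset ι) (v : ι → Fin d → ℝ) :
    (∑ i ∈ s, vecMulVec (v i) (v i)).PosSemidef :=
  posSemidef_sum s fun i _ => by simpa using posSemidef_vecMulVec_self_star (v i)

theorem posDef_gramStage (hlam : 0 < lam) (n h : ℕ) : (gramStage d H lam φ n h).PosDef :=
  ((PosDef.one.smul hlam).add_posSemidef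
    (posSemidef_sum _ fun _ _ => posSemidef_sum_vecMulVec_self _ _)).add_posSemidef
    (posSemidef_sum_vecMulVec_self _ _)

theorem posDef_gramEpisode (hlam : 0 < lam) (n : ℕ) : (gramEpisode d H lam φ n).PosDef :=
  gramStage_zero (H := H) (φ := φ) n ▸ posDef_gramStage hlam n 0

theorem monotone_det_gramStage (hlam : 0 < lam) (n : ℕ) :
    Monotone fun h => (gramStage d H lam φ n h).det :=
  monotone_nat_of_le_succ fun h => by
    simpa only [gramStage_succ] using
      (posDef_gramStage hlam n h).det_le_det_add_vecMulVec_self (φ n h)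

theorem monotone_det_mul_dotProduct_inv_gramStage (hlam : 0 < lam) (n : ℕ) (x : Fin d → ℝ) :
    Monotone fun h => (gramStage d H lam φ n h).det * (x ⬝ᵥ (gramStage d H lam φ n h)⁻¹ *ᵥ x) :=
  monotone_nat_of_le_succ fun h => by
    simpa only [gramStage_succ] using
      (posDef_gramStage hlam n h).det_mul_dotProduct_inv_mulVec_le_add_vecMulVec_self (φ n h) x

theorem monotone_det_gramEpisode (hlam : 0 < lam) :
    Monotone fun n => (gramEpisode d H lam φ n).det :=
  monotone_nat_of_le_succ fun n => by
    simpa only [gramEpisode_succ, gramStage_zero] using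
      monotone_det_gramStage (φ := φ) hlam n (Nat.zero_le H)

theorem det_gramEpisode_zero : (gramEpisode d H lam φ 0).det = lam ^ d := by
  simp [gramEpisode]

theorem trace_gramEpisode_le {N : ℕ} {C : ℝ}
    (hφ : ∀ n < N, ∀ h < H, φ n h ⬝ᵥ φ n h ≤ C) :
    (gramEpisode d H lam φ N).trace ≤ lam * d + N * H * C := by
  have hsum : ∑ n ∈ range N, ∑ h ∈ range H, φ n h ⬝ᵥ φ n h ≤ ∑ _n ∈ range N, ∑ _h ∈ range H, C :=
    sum_le_sum fun n hn => sum_le_sum fun h hh => hφ n (mem_range.1 hn) h (mem_range.1 hh)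
  simp only [sum_const, card_range, nsmul_eq_mul] at hsum
  simp only [gramEpisode, trace_add, trace_smul, trace_one, trace_sum, trace_vecMulVec,
    Fintype.card_fin, smul_eq_mul]
  linarith

theorem card_doubling_det_gramEpisode_le (hlam : 0 < lam) {N : ℕ} {C : ℝ} (hC : 0 ≤ C)
    (hφ : ∀ n < N, ∀ h < H, φ n h ⬝ᵥ φ n h ≤ C) :
    (#{n ∈ range N | 2 * (gramEpisode d H lam φ n).det < (gramEpisode d H lam φ (n + 1)).det} : ℝ)
      ≤ 2 * d * Real.log (1 + N * H * C / (lam * d)) := by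
  set K := #{n ∈ range N | 2 * (gramEpisode d H lam φ n).det < (gramEpisode d H lam φ (n + 1)).det}
  set a := N * H * C / (lam * d) with ha_def
  have ha : 0 ≤ a := by positivity
  have htrace : (gramEpisode d H lam φ N).trace / d ≤ lam * (1 + a) := by
    rcases Nat.eq_zero_or_pos d with rfl | hd
    · simp only [CharP.cast_eq_zero, div_zero]
      positivity
    rw [div_le_iff₀ (by positivity)]
    refine (trace_gramEpisode_le hφ).trans (le_of_eq ?_)
    rw [ha_def]
    field_simp
  have hpow : lam ^ d * 2 ^ K ≤ lam ^ d * (1 + a) ^ d :=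
    calc lam ^ d * 2 ^ K ≤ (gramEpisode d H lam φ N).det := by
          simpa only [det_gramEpisode_zero] using
            mul_two_pow_card_filter_le_of_monotone (monotone_det_gramEpisode hlam) N
      _ ≤ ((gramEpisode d H lam φ N).trace / d) ^ d := by
          simpa using
            (posDef_gramEpisode (H := H) (φ := φ) hlam N).posSemidef.det_le_trace_div_card_pow
      _ ≤ (lam * (1 + a)) ^ d := by
          gcongr
          exact div_nonneg (posDef_gramEpisode hlam N).posSemidef.trace_nonneg d.cast_nonneg
      _ = lam ^ d * (1 + a) ^ d := mul_pow _ _ _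
  have hlog : K * Real.log 2 ≤ d * Real.log (1 + a) := by
    rw [← Real.log_pow, ← Real.log_pow]
    exact Real.log_le_log (by positivity) (le_of_mul_le_mul_left hpow (by positivity))
  nlinarith [Real.log_two_gt_d9, Real.log_nonneg (by linarith : (1 : ℝ) ≤ 1 + a)]

theorem sqrt_dotProduct_inv_gramEpisode_le (hlam : 0 < lam) (n : ℕ) (x : Fin d → ℝ) :
    √(x ⬝ᵥ (gramEpisode d H lam φ n)⁻¹ *ᵥ x) ≤ √(x ⬝ᵥ x) / √lam := by
  rw [← Real.sqrt_div' _ hlam.le]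
  exact Real.sqrt_le_sqrt (dotProduct_inv_mulVec_le_div hlam
    (posSemidef_sum _ fun _ _ => posSemidef_sum_vecMulVec_self _ _) x)

theorem sqrt_dotProduct_inv_gramEpisode_le_two_mul (hlam : 0 < lam) {n h : ℕ} (hh : h ≤ H)
    (hn : (gramEpisode d H lam φ (n + 1)).det ≤ 2 * (gramEpisode d H lam φ n).det)
    (x : Fin d → ℝ) :
    √(x ⬝ᵥ (gramEpisode d H lam φ n)⁻¹ *ᵥ x) ≤ 2 * √(x ⬝ᵥ (gramStage d H lam φ n h)⁻¹ *ᵥ x) := by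
  set q := x ⬝ᵥ (gramStage d H lam φ n h)⁻¹ *ᵥ x
  have hq : 0 ≤ q := by
    simpa using (posDef_gramStage hlam n h).inv.posSemidef.dotProduct_mulVec_nonneg x
  have hdet := (posDef_gramEpisode (H := H) (φ := φ) hlam n).det_pos
  have hle : x ⬝ᵥ (gramEpisode d H lam φ n)⁻¹ *ᵥ x ≤ 2 * q := by
    refine le_of_mul_le_mul_left ?_ hdet
    calc _ = (gramStage d H lam φ n 0).det * (x ⬝ᵥ (gramStage d H lam φ n 0)⁻¹ *ᵥ x) := by
          rw [gramStage_zero]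
      _ ≤ (gramStage d H lam φ n h).det * q :=
          monotone_det_mul_dotProduct_inv_gramStage hlam n x (Nat.zero_le h)
      _ ≤ (gramEpisode d H lam φ (n + 1)).det * q := by
          rw [gramEpisode_succ]
          exact mul_le_mul_of_nonneg_right (monotone_det_gramStage hlam n hh) hq
      _ ≤ _ := by nlinarith
  calc _ ≤ √(2 * q) := Real.sqrt_le_sqrt hle
    _ = √2 * √q := Real.sqrt_mul zero_le_two q
    _ ≤ 2 * √q := by
        gcongr
        nlinarith [Real.sq_sqrt zero_le_two, Real.sqrt_nonneg 2]

end Gram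

/-- Corollary: from `Σ_n⁻¹`-norms to `Σ_{n,h}⁻¹`-norms.
`∑_{n,h} ‖φ_{n,h}‖_{Σ_n⁻¹} ≤ 2 ∑_{n,h} ‖φ_{n,h}‖_{Σ_{n,h}⁻¹}
  + (2 L_φ H d / √λ) log(1 + N H L_φ² / (λ d))`. -/
theorem gram_episode_norm_sum_le
    (N H d : ℕ) (lam Lphi : ℝ) (hlam : 0 < lam) (hL : 0 < Lphi)
    (φ : ℕ → ℕ → Fin d → ℝ)
    (hφ : ∀ n h, n < N → h < H → Real.sqrt (φ n h ⬝ᵥ φ n h) ≤ Lphi) :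
    ∑ n ∈ Finset.range N, ∑ h ∈ Finset.range H,
        Real.sqrt (φ n h ⬝ᵥ ((gramEpisode d H lam φ n)⁻¹).mulVec (φ n h))
      ≤ 2 * ∑ n ∈ Finset.range N, ∑ h ∈ Finset.range H,
            Real.sqrt (φ n h ⬝ᵥ ((gramStage d H lam φ n h)⁻¹).mulVec (φ n h))
        + (2 * Lphi * H * d / Real.sqrt lam) *
            Real.log (1 + N * H * Lphi ^ 2 / (lam * d)) := by
  set E := gramEpisode d H lam φ
  have hφ' : ∀ n < N, ∀ h < H, φ n h ⬝ᵥ φ n h ≤ Lphi ^ 2 := fun n hn h hh =>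
    (Real.sqrt_le_left hL.le).1 (hφ n h hn hh)
  have hdoubling : ∀ n ∈ range N, 2 * (E n).det < (E (n + 1)).det →
      ∑ h ∈ range H, √(φ n h ⬝ᵥ (E n)⁻¹ *ᵥ φ n h) ≤ H * (Lphi / √lam) := fun n hn _ => by
    simpa using sum_le_sum fun h hh =>
      (sqrt_dotProduct_inv_gramEpisode_le hlam n (φ n h)).trans
        (div_le_div_of_nonneg_right (hφ n h (mem_range.1 hn) (mem_range.1 hh))
          (Real.sqrt_nonneg lam))
  have hregular : ∀ n ∈ range N, ¬ 2 * (E n).det < (E (n + 1)).det →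
      ∑ h ∈ range H, √(φ n h ⬝ᵥ (E n)⁻¹ *ᵥ φ n h)
        ≤ 2 * ∑ h ∈ range H, √(φ n h ⬝ᵥ (gramStage d H lam φ n h)⁻¹ *ᵥ φ n h) :=
    fun n _ hn => by
      rw [mul_sum]
      exact sum_le_sum fun h hh => sqrt_dotProduct_inv_gramEpisode_le_two_mul hlam
        (mem_range.1 hh).le (not_lt.1 hn) (φ n h)
  have hcard := card_doubling_det_gramEpisode_le hlam (sq_nonneg Lphi) hφ'
  calc _ ≤ ∑ n ∈ range N, 2 * ∑ h ∈ range H, √(φ n h ⬝ᵥ (gramStage d H lam φ n h)⁻¹ *ᵥ φ n h)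
        + #{n ∈ range N | 2 * (E n).det < (E (n + 1)).det} * (H * (Lphi / √lam)) :=
        sum_le_sum_add_card_filter_mul _ _ (fun _ _ => by positivity) hdoubling hregular
    _ ≤ _ := by
        rw [← mul_sum]
        grw [hcard]
        exact le_of_eq (by ring)
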